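/- Let H be a finite-dimensional ℂ-vector space with conjugate-linear involution σ, and let (I^{p,q}) be a bigrading of H satisfying the conjugation condition with respect to σ and such that dim_ℂ I^{p,q} = dim_ℂ I^{q,p} for all (p,q) ∈ ℤ². For (p,q) ∈ ℤ², let D^{p,q} ⊆ H* := Hom_ℂ(H, ℂ) be the subspace of linear functionals vanishing on I^{r,s} for every (r,s) ≠ (−p,−q), and let σ* : H* → H* be the conjugate-linear involution σ*(f) := conj ∘ f ∘ σ. Then (D^{p,q}) is a bigrading of H* and it satisfies the conjugation condition with respect to σ*. -/

import Mathlib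

open scoped TensorProduct

noncomputable section

/-- A conjugate-linear involution of a complex vector space `H`: an additive map `σ`
with `σ (c • v) = (conj c) • σ v` and `σ ∘ σ = id`. -/
structure ConjInv (H : Type) [AddCommGroup H] [Module ℂ H] where
  toFun : H → H
  map_add' : ∀ x y : H, toFun (x + y) = toFun x + toFun y
  map_smul' : ∀ (c : ℂ) (x : H), toFun (c • x) = (starRingEnd ℂ) c • toFun x
  invol' : ∀ x : H, toFun (toFun x) = x

variable {H : Type} [AddCommGroup H] [Module ℂ H]

/-- A bigrading of a complex vector space `H`: a family `I^{p,q}` of `ℂ`-subspaces,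
only finitely many nonzero, with `H = ⊕_{p,q} I^{p,q}` (internal direct sum). -/
structure IsBigrading (I : ℤ × ℤ → Submodule ℂ H) : Prop where
  finite : {pq : ℤ × ℤ | I pq ≠ ⊥}.Finite
  internal : DirectSum.IsInternal I

/-- The subspace `⊕_{r<p, s<q} I^{r,s}`. -/
def lowerPieces (I : ℤ × ℤ → Submodule ℂ H) (p q : ℤ) : Submodule ℂ H :=
  ⨆ rs ∈ {rs : ℤ × ℤ | rs.1 < p ∧ rs.2 < q}, I rs

/-- The conjugation condition with respect to a conjugate-linear involution `σ`:
for all `(p,q)`, the images of `I^{p,q}` and of `σ(I^{q,p})` in the quotient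
`H / ⊕_{r<p,s<q} I^{r,s}` coincide. -/
def ConjCondition (σ : ConjInv H) (I : ℤ × ℤ → Submodule ℂ H) : Prop :=
  ∀ p q : ℤ,
    I (p, q) ⊔ lowerPieces I p q
      = Submodule.span ℂ (σ.toFun '' (I (q, p) : Set H)) ⊔ lowerPieces I p q

/-- The piece `D^{p,q}` of the dual: functionals vanishing on every `I^{r,s}` with
`(r,s) ≠ (-p,-q)`. -/
def dualPiece (I : ℤ × ℤ → Submodule ℂ H) (pq : ℤ × ℤ) :
    Submodule ℂ (Module.Dual ℂ H) where
  carrier := {f | ∀ rs : ℤ × ℤ, rs ≠ (-pq.1, -pq.2) → ∀ x ∈ I rs, f x = 0}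
  add_mem' := by
    intro f g hf hg rs hrs x hx
    simp [hf rs hrs x hx, hg rs hrs x hx]
  zero_mem' := by
    intro rs hrs x hx
    simp
  smul_mem' := by
    intro c f hf rs hrs x hx
    simp [hf rs hrs x hx]

/-- The conjugate-dual of a functional: `f ↦ conj ∘ f ∘ σ`. -/
def ConjInv.dualFun (σ : ConjInv H) (f : Module.Dual ℂ H) : Module.Dual ℂ H where
  toFun x := (starRingEnd ℂ) (f (σ.toFun x))
  map_add' x y := by simp only [σ.map_add', map_add]
  map_smul' c x := by
    simp only [σ.map_smul', map_smul, smul_eq_mul, map_mul, Complex.conj_conj,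
      RingHom.id_apply]

/-- The conjugate-linear involution `σ*` of the dual space induced by `σ`:
`σ* f := conj ∘ f ∘ σ`. -/
def ConjInv.dual (σ : ConjInv H) : ConjInv (Module.Dual ℂ H) where
  toFun := σ.dualFun
  map_add' f g := by
    ext x
    simp [ConjInv.dualFun]
  map_smul' c f := by
    ext x
    simp [ConjInv.dualFun, smul_eq_mul, map_mul, mul_comm]
  invol' f := by
    ext x
    simp [ConjInv.dualFun, σ.invol']

/-!
Identify `D^{p,q}` with the dual of `I^{-p,-q}`: a sum of pieces `D^{r,s}` is then the
annihilator of the complementary sum of pieces of `I`, and `σ*` carries the annihilator of `U`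
to the annihilator of `σ U`. Writing `c = (-p,-q)` and `T` for the complement of the open quadrant
above `c`, the conjugation condition for the dual at `(p,q)` becomes the identity
`⊕_{T ∖ {c}} I = σ(⊕_{≠ (-q,-p)} I) ∩ ⊕_T I` in `H`. The conjugation condition for `I`
says `σ(I^{a,b}) ⊆ I^{b,a} ⊕ ⊕_{r<b, s<a} I^{r,s}`; this gives the inclusion `⊆` and shows
that the two spaces on the right span `H`, so equality follows by counting dimensions, using
`dim I^{-p,-q} = dim I^{-q,-p}`.
-/

open Module Submodule Set Pointwise

section DualDecomposition

variable {K V ι : Type*} [Field K] [AddCommGroup V] [Module K V]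

theorem mem_dualAnnihilator_biSup {I : ι → Submodule K V} {p : ι → Prop} {f : Dual K V} :
    f ∈ (⨆ (j) (_ : p j), I j).dualAnnihilator ↔ ∀ j, p j → ∀ x ∈ I j, f x = 0 := by
  simp [dualAnnihilator_iSup_eq, mem_dualAnnihilator]

/-- The copy of `(I i)*` inside `Dual K V` determined by the decomposition `I`. -/
def dualComponent (I : ι → Submodule K V) (i : ι) : Submodule K (Dual K V) :=
  (⨆ (j) (_ : j ≠ i), I j).dualAnnihilator

namespace DirectSum.IsInternal

variable [DecidableEq ι] {I : ι → Submodule K V}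

def proj (hI : IsInternal I) (i : ι) : V →ₗ[K] V :=
  (I i).subtype ∘ₗ component K ι (fun i => I i) i ∘ₗ
    (LinearEquiv.ofBijective (coeLinearMap I) hI).symm.toLinearMap

theorem proj_mem (hI : IsInternal I) (i : ι) (x : V) : hI.proj i x ∈ I i :=
  SetLike.coe_mem _

theorem proj_eq_self (hI : IsInternal I) {i : ι} {x : V} (hx : x ∈ I i) : hI.proj i x = x :=
  congrArg Subtype.val (hI.ofBijective_coeLinearMap_of_mem hx)

theorem proj_eq_zero (hI : IsInternal I) {i j : ι} (hij : j ≠ i) {x : V} (hx : x ∈ I j) :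
    hI.proj i x = 0 :=
  congrArg Subtype.val (hI.ofBijective_coeLinearMap_of_mem_ne hij hx)

theorem sum_proj (hI : IsInternal I) (hfin : {i | I i ≠ ⊥}.Finite) :
    ∑ i ∈ hfin.toFinset, hI.proj i = LinearMap.id := by
  suffices ⊤ ≤ LinearMap.eqLocus (∑ i ∈ hfin.toFinset, hI.proj i) LinearMap.id from
    LinearMap.ext fun x => this trivial
  rw [← hI.submodule_iSup_eq_top]
  refine iSup_le fun j x hx => ?_
  by_cases hj : I j = ⊥
  · simp [(mem_bot K).1 (hj ▸ hx)]
  · simp only [LinearMap.mem_eqLocus, LinearMap.sum_apply, LinearMap.id_apply]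
    rw [Finset.sum_eq_single_of_mem j (hfin.mem_toFinset.2 hj) fun i _ hij =>
      hI.proj_eq_zero (Ne.symm hij) hx, hI.proj_eq_self hx]

theorem isCompl_iSup_ne (hI : IsInternal I) (i : ι) : IsCompl (I i) (⨆ (j) (_ : j ≠ i), I j) :=
  ⟨hI.submodule_iSupIndep i,
    codisjoint_iff.2 (by rw [← iSup_split_single, hI.submodule_iSup_eq_top])⟩

theorem comp_proj_mem_dualComponent (hI : IsInternal I) (f : Dual K V) (i : ι) :
    f ∘ₗ hI.proj i ∈ dualComponent I i :=
  mem_dualAnnihilator_biSup.2 fun _ hj x hx => by simp [hI.proj_eq_zero hj hx]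

theorem iSup_dualComponent (hI : IsInternal I) (hfin : {i | I i ≠ ⊥}.Finite) (S : Set ι) :
    ⨆ i ∈ S, dualComponent I i = (⨆ j ∈ Sᶜ, I j).dualAnnihilator := by
  refine le_antisymm (iSup₂_le fun i hi => dualAnnihilator_anti <|
    biSup_mono fun j hj => ne_of_mem_of_not_mem hi hj |>.symm) fun f hf => ?_
  have hf' := mem_dualAnnihilator_biSup.1 hf
  have hsum : f = ∑ i ∈ hfin.toFinset, f ∘ₗ hI.proj i := LinearMap.ext fun x => by
    simp only [LinearMap.sum_apply, LinearMap.comp_apply, ← map_sum]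
    rw [← LinearMap.sum_apply, hI.sum_proj hfin, LinearMap.id_apply]
  rw [hsum]
  refine sum_mem fun i _ => ?_
  by_cases hi : i ∈ S
  · exact le_biSup (dualComponent I) hi (hI.comp_proj_mem_dualComponent f i)
  · have : f ∘ₗ hI.proj i = 0 := LinearMap.ext fun x => hf' i hi _ (hI.proj_mem i x)
    rw [this]
    exact zero_mem _

theorem isInternal_dualComponent (hI : IsInternal I) (hfin : {i | I i ≠ ⊥}.Finite) :
    IsInternal (dualComponent I) := by
  rw [isInternal_submodule_iff_iSupIndep_and_iSup_eq_top]
  refine ⟨fun i => ?_, by simpa using hI.iSup_dualComponent hfin univ⟩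
  have hle : ⨆ (j) (_ : j ≠ i), dualComponent I j ≤ (I i).dualAnnihilator :=
    iSup₂_le fun j hj => dualAnnihilator_anti (le_iSup₂_of_le i hj.symm le_rfl)
  exact (Subspace.isCompl_dualAnnihilator (hI.isCompl_iSup_ne i)).disjoint.symm.mono_right hle

theorem finite_dualComponent_ne_bot (hI : IsInternal I) (hfin : {i | I i ≠ ⊥}.Finite) :
    {i | dualComponent I i ≠ ⊥}.Finite := by
  refine hfin.subset fun i hD hbot => hD ?_
  have htop := codisjoint_bot.1 (hbot ▸ (hI.isCompl_iSup_ne i).codisjoint.symm)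
  rw [dualComponent, htop, dualAnnihilator_top]

end DirectSum.IsInternal

end DualDecomposition

theorem Submodule.eq_inf_of_finrank_add_eq {K V : Type*} [DivisionRing K] [AddCommGroup V]
    [Module K V] [FiniteDimensional K V] {A B C : Submodule K V} (hB : A ≤ B) (hC : A ≤ C)
    (hBC : B ⊔ C = ⊤) (hdim : finrank K A + finrank K V = finrank K B + finrank K C) :
    A = B ⊓ C := by
  refine eq_of_le_of_finrank_le (le_inf hB hC) ?_
  have := finrank_sup_add_finrank_inf_eq B C
  rw [hBC, finrank_top] at this
  omega

theorem iSupIndep.finrank_biSup_insert {K V ι : Type*} [DivisionRing K] [AddCommGroup V]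
    [Module K V] [FiniteDimensional K V] {I : ι → Submodule K V} (hI : iSupIndep I) {i : ι}
    {S : Set ι} (hi : i ∉ S) :
    finrank K ↥(⨆ j ∈ insert i S, I j) =
      finrank K (I i) + finrank K ↥(⨆ j ∈ S, I j) := by
  have := finrank_sup_add_finrank_inf_eq (I i) (⨆ j ∈ S, I j)
  rwa [disjoint_iff.1 (hI.disjoint_biSup hi), finrank_bot, add_zero, ← iSup_insert] at this

namespace ConjInv

variable (σ : ConjInv H)

def toLinearEquiv : H ≃ₗ⋆[ℂ] H where
  toFun := σ.toFun
  invFun := σ.toFun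
  map_add' := σ.map_add'
  map_smul' := σ.map_smul'
  left_inv := σ.invol'
  right_inv := σ.invol'

theorem toLinearEquiv_symm : σ.toLinearEquiv.symm = σ.toLinearEquiv := rfl

theorem span_image_eq_map (U : Submodule ℂ H) :
    span ℂ (σ.toFun '' U) = U.map σ.toLinearEquiv.toLinearMap :=
  span_eq (U.map σ.toLinearEquiv.toLinearMap)

theorem le_map_iff_map_le {U W : Submodule ℂ H} :
    U ≤ W.map σ.toLinearEquiv.toLinearMap ↔ U.map σ.toLinearEquiv.toLinearMap ≤ W := by
  rw [map_le_iff_le_comap, comap_equiv_eq_map_symm, toLinearEquiv_symm]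

theorem finrank_map (U : Submodule ℂ H) :
    finrank ℂ ↥(U.map σ.toLinearEquiv.toLinearMap) = finrank ℂ U :=
  congrArg Cardinal.toNat <| (rank_eq_of_equiv_equiv (starRingEnd ℂ)
    (σ.toLinearEquiv.submoduleMap U).toAddEquiv (starRingAut (R := ℂ)).bijective
    fun c x => map_smulₛₗ (σ.toLinearEquiv.submoduleMap U) c x).symm

theorem span_dual_image_dualAnnihilator (U : Submodule ℂ H) :
    span ℂ (σ.dual.toFun '' U.dualAnnihilator) =
      (U.map σ.toLinearEquiv.toLinearMap).dualAnnihilator := by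
  ext g
  rw [σ.dual.span_image_eq_map, mem_map_equiv, toLinearEquiv_symm]
  simp [mem_dualAnnihilator, ConjInv.dual, ConjInv.dualFun, toLinearEquiv]

end ConjInv

section Bigrading

variable {I : ℤ × ℤ → Submodule ℂ H}

theorem lowerPieces_eq_biSup (p q : ℤ) :
    lowerPieces I p q = ⨆ rs ∈ Iio p ×ˢ Iio q, I rs :=
  rfl

theorem dualPiece_eq_dualComponent (pq : ℤ × ℤ) : dualPiece I pq = dualComponent I (-pq) := by
  ext f
  exact mem_dualAnnihilator_biSup.symm

theorem iSup_dualPiece (hI : IsBigrading I) (S : Set (ℤ × ℤ)) :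
    ⨆ pq ∈ S, dualPiece I pq = (⨆ j ∈ (-S)ᶜ, I j).dualAnnihilator := by
  simp_rw [dualPiece_eq_dualComponent]
  rw [← hI.internal.iSup_dualComponent hI.finite, ← image_neg_eq_neg, iSup_image]

theorem isBigrading_dualPiece (hI : IsBigrading I) : IsBigrading (dualPiece I) := by
  have hint := hI.internal.isInternal_dualComponent hI.finite
  rw [DirectSum.isInternal_submodule_iff_iSupIndep_and_iSup_eq_top] at hint
  rw [show dualPiece I = dualComponent I ∘ Neg.neg from funext dualPiece_eq_dualComponent]
  refine ⟨finite_neg.2 (hI.internal.finite_dualComponent_ne_bot hI.finite), ?_⟩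
  rw [DirectSum.isInternal_submodule_iff_iSupIndep_and_iSup_eq_top]
  exact ⟨hint.1.comp neg_injective, (neg_surjective.iSup_comp _).trans hint.2⟩

theorem lowerPieces_dualPiece (hI : IsBigrading I) (p q : ℤ) :
    lowerPieces (dualPiece I) p q =
      (⨆ j ∈ (Ioi (-p) ×ˢ Ioi (-q))ᶜ, I j).dualAnnihilator := by
  rw [lowerPieces_eq_biSup, iSup_dualPiece hI, neg_prod, neg_Iio, neg_Iio]

theorem dualPiece_sup_lowerPieces_dualPiece (hI : IsBigrading I) (p q : ℤ) :
    dualPiece I (p, q) ⊔ lowerPieces (dualPiece I) p q =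
      (⨆ j ∈ (insert (-p, -q) (Ioi (-p) ×ˢ Ioi (-q)))ᶜ, I j).dualAnnihilator := by
  rw [lowerPieces_eq_biSup, ← iSup_insert, iSup_dualPiece hI, neg_insert, neg_prod, neg_Iio,
    neg_Iio, Prod.neg_mk]

theorem sup_lowerPieces_le_biSup {a b : ℤ} {S : Set (ℤ × ℤ)} (h : (a, b) ∈ S)
    (hS : Iio a ×ˢ Iio b ⊆ S) : I (a, b) ⊔ lowerPieces I a b ≤ ⨆ j ∈ S, I j :=
  sup_le (le_biSup I h) (biSup_mono fun _ hj => hS hj)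

variable (σ : ConjInv H)

theorem ConjInv.map_le_sup_lowerPieces (hconj : ConjCondition σ I) (a b : ℤ) :
    (I (a, b)).map σ.toLinearEquiv.toLinearMap ≤ I (b, a) ⊔ lowerPieces I b a := by
  have h := hconj b a
  rw [σ.span_image_eq_map] at h
  exact h ▸ le_sup_left

theorem ConjInv.le_map_sup_lowerPieces (hconj : ConjCondition σ I) (a b : ℤ) :
    I (a, b) ≤ (I (b, a) ⊔ lowerPieces I b a).map σ.toLinearEquiv.toLinearMap :=
  σ.le_map_iff_map_le.2 (σ.map_le_sup_lowerPieces hconj a b)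

theorem biSup_compl_insert_eq_map_inf [FiniteDimensional ℂ H] (hI : IsBigrading I)
    (hconj : ConjCondition σ I)
    (hsym : ∀ p q : ℤ, finrank ℂ ↥(I (p, q)) = finrank ℂ ↥(I (q, p))) (a b : ℤ) :
    ⨆ j ∈ (insert (a, b) (Ioi a ×ˢ Ioi b))ᶜ, I j =
      (⨆ (j) (_ : j ≠ (b, a)), I j).map σ.toLinearEquiv.toLinearMap ⊓
        ⨆ j ∈ (Ioi a ×ˢ Ioi b)ᶜ, I j := by
  have hc : (a, b) ∈ (Ioi a ×ˢ Ioi b)ᶜ := fun h => lt_irrefl a h.1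
  have hcompl := hI.internal.isCompl_iSup_ne (b, a)
  refine Submodule.eq_inf_of_finrank_add_eq ?_
    (biSup_mono fun j hj hU => hj (mem_insert_of_mem _ hU)) ?_ ?_
  · refine iSup₂_le fun j hj => (σ.le_map_sup_lowerPieces hconj j.1 j.2).trans
      (map_mono (sup_lowerPieces_le_biSup (fun h => ?_) fun k hk hk' => ?_))
    · obtain ⟨h2, h1⟩ := Prod.mk.inj h
      exact hj (Or.inl (Prod.ext h1 h2))
    · subst hk'
      exact hj (Or.inr ⟨hk.2, hk.1⟩)
  · have hba :
        (I (b, a)).map σ.toLinearEquiv.toLinearMap ≤ ⨆ j ∈ (Ioi a ×ˢ Ioi b)ᶜ, I j :=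
      (σ.map_le_sup_lowerPieces hconj b a).trans
        (sup_lowerPieces_le_biSup hc fun k hk hU => lt_asymm hk.1 (mem_Ioi.1 hU.1))
    rw [eq_top_iff, ← LinearEquiv.range σ.toLinearEquiv, ← Submodule.map_top,
      ← hcompl.sup_eq_top, Submodule.map_sup]
    exact sup_le (hba.trans le_sup_right) le_sup_left
  · have hC : insert (a, b) (insert (a, b) (Ioi a ×ˢ Ioi b))ᶜ = (Ioi a ×ˢ Ioi b)ᶜ := by
      ext j
      by_cases h : j = (a, b) <;> simp [h, hc]
    rw [σ.finrank_map, ← hC, hI.internal.submodule_iSupIndep.finrank_biSup_insert (by simp),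
      ← finrank_add_eq_of_isCompl hcompl, hsym a b]
    ring

theorem conjCondition_dualPiece [FiniteDimensional ℂ H] (hI : IsBigrading I)
    (hconj : ConjCondition σ I)
    (hsym : ∀ p q : ℤ, finrank ℂ ↥(I (p, q)) = finrank ℂ ↥(I (q, p))) :
    ConjCondition σ.dual (dualPiece I) := by
  intro p q
  rw [dualPiece_sup_lowerPieces_dualPiece hI, lowerPieces_dualPiece hI,
    dualPiece_eq_dualComponent, dualComponent, Prod.neg_mk, σ.span_dual_image_dualAnnihilator,
    ← Subspace.dualAnnihilator_inf_eq, biSup_compl_insert_eq_map_inf σ hI hconj hsym]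

end Bigrading

/-- the dual family `(D^{p,q})` of a bigrading satisfying the conjugation
condition (with Hodge-symmetric dimensions) is a bigrading of the dual space satisfying
the conjugation condition with respect to the induced involution `σ*`. -/
theorem dualPiece_isBigrading_and_conjCondition
    (H : Type) [AddCommGroup H] [Module ℂ H] [FiniteDimensional ℂ H]
    (σ : ConjInv H) (I : ℤ × ℤ → Submodule ℂ H)
    (hI : IsBigrading I) (hconj : ConjCondition σ I)
    (hsym : ∀ p q : ℤ, Module.finrank ℂ ↥(I (p, q)) = Module.finrank ℂ ↥(I (q, p))) :
    IsBigrading (dualPiece I) ∧ ConjCondition σ.dual (dualPiece I) :=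
  ⟨isBigrading_dualPiece hI, conjCondition_dualPiece σ hI hconj hsym⟩
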